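/- Let A ⊆ B(X) be an abelian, unital, semisimple, strongly closed subalgebra of split strict multiplicity p such that every quotient A/Iⱼ is semisimple. Then A is hereditarily reflexive: every norm-closed linear subspace L ⊆ A is reflexive, i.e., any T ∈ B(X) with Tx ∈ closure(Lx) for all x ∈ X belongs to L. -/

import Mathlib

/-!
Being strongly closed, `A` is norm closed, hence a commutative Banach algebra; by the open mapping
theorem each closed orbit `A xⱼ` carries the quotient norm of `A / Iⱼ`, and the projections of
`X = ⊕ A xⱼ` are bounded. If `T x ∈ closure (L x)` for all `x`, then `T` leaves every `A xⱼ`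
invariant. For a character `χ` vanishing on `Iⱼ` one has `|χ a| ≤ K ‖a xⱼ‖`, and approximating
`T (h xⱼ)` by `l h xⱼ` shows that `χ g = 0` whenever `g xⱼ = T (h xⱼ)` and `χ h = 0`. Taking
`h = f - χ f` puts `g - f bⱼ` (where `T xⱼ = bⱼ xⱼ`) in every maximal ideal over `Iⱼ`, so
semisimplicity of `A / Iⱼ` gives `T (f xⱼ) = f (T xⱼ)`. Hence each `T - l` with `l ∈ L` acts on
`A xⱼ` as an element of `A`, which yields `‖T - l‖ ≤ K ‖(T - l) (∑ xⱼ)‖`; approximating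
`T (∑ xⱼ)` by `l (∑ xⱼ)` puts `T` in the closure of `L`.
-/

/-- The annihilator ideal `Iⱼ = {a ∈ A : a xⱼ = 0}` of a vector. -/
def annIdeal {X : Type*} [NormedAddCommGroup X] [NormedSpace ℂ X]
    (A : Subalgebra ℂ (X →L[ℂ] X)) (x : X) : Ideal ↥A where
  carrier := {a | (a : X →L[ℂ] X) x = 0}
  add_mem' := fun {a b} ha hb => by
    simp only [Set.mem_setOf_eq] at *
    rw [Subalgebra.coe_add, ContinuousLinearMap.add_apply, ha, hb, add_zero]
  zero_mem' := by simp
  smul_mem' := fun c a ha => by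
    simp only [Set.mem_setOf_eq, smul_eq_mul] at *
    rw [Subalgebra.coe_mul, ContinuousLinearMap.mul_apply, ha, map_zero]


open WeakDual

namespace ContinuousLinearMap

variable {𝕜 E F : Type*} [NontriviallyNormedField 𝕜] [NormedAddCommGroup E] [NormedSpace 𝕜 E]
  [NormedAddCommGroup F] [NormedSpace 𝕜 F]

theorem isClosed_of_closure_coeFn_subset (S : Set (E →L[𝕜] F))
    (hS : ∀ T : E →L[𝕜] F,
      (T : E → F) ∈ closure ((fun a : E →L[𝕜] F => (a : E → F)) '' S) → T ∈ S) :
    IsClosed S :=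
  isClosed_of_closure_subset fun T hT =>
    hS T (image_closure_subset_closure_image continuous_coeFun ⟨T, hT, rfl⟩)

theorem exists_preimage_norm_le_of_isClosed_range [CompleteSpace E] [CompleteSpace F]
    (f : E →L[𝕜] F) (hf : IsClosed (LinearMap.range (f : E →ₗ[𝕜] F) : Set F)) :
    ∃ C > 0, ∀ y ∈ LinearMap.range (f : E →ₗ[𝕜] F), ∃ x, f x = y ∧ ‖x‖ ≤ C * ‖y‖ := by
  have : CompleteSpace (LinearMap.range (f : E →ₗ[𝕜] F)) := hf.completeSpace_coe
  obtain ⟨C, hC, h⟩ := f.rangeRestrict.exists_preimage_norm_le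
    fun ⟨_, x, hx⟩ => ⟨x, Subtype.ext hx⟩
  refine ⟨C, hC, fun y hy => ?_⟩
  obtain ⟨x, hx, hxC⟩ := h ⟨y, hy⟩
  exact ⟨x, congrArg Subtype.val hx, hxC⟩

/-- `Ref S`: a subspace `S` is reflexive when `reflexiveClosure S ⊆ S`. -/
def reflexiveClosure (S : Set (E →L[𝕜] F)) : Set (E →L[𝕜] F) :=
  {T | ∀ y, T y ∈ closure ((fun l : E →L[𝕜] F => l y) '' S)}

theorem mem_closure_of_norm_sub_le {S : Set (E →L[𝕜] F)} {T : E →L[𝕜] F} (y : E) (K : ℝ)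
    (hK : ∀ l ∈ S, ‖T - l‖ ≤ K * ‖T y - l y‖)
    (hT : T y ∈ closure ((fun l : E →L[𝕜] F => l y) '' S)) : T ∈ closure S := by
  obtain ⟨u, hu, hlim⟩ := mem_closure_iff_seq_limit.mp hT
  choose l hlS hly using hu
  have hbound : Filter.Tendsto (fun n => K * ‖T y - l n y‖) Filter.atTop (nhds 0) := by
    simpa [hly, norm_sub_rev] using (tendsto_iff_norm_sub_tendsto_zero.mp hlim).const_mul K
  refine mem_closure_of_tendsto (b := Filter.atTop) (tendsto_iff_norm_sub_tendsto_zero.mpr ?_)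
    (.of_forall hlS)
  exact squeeze_zero (fun _ => norm_nonneg _)
    (fun n => by rw [norm_sub_rev]; exact hK _ (hlS n)) hbound

end ContinuousLinearMap

open ContinuousLinearMap

theorem exists_norm_le_norm_sum_of_bijective {𝕜 E ι : Type*} [NontriviallyNormedField 𝕜]
    [NormedAddCommGroup E] [NormedSpace 𝕜 E] [CompleteSpace E] [Fintype ι]
    (M : ι → Submodule 𝕜 E) (hM : ∀ i, IsClosed (M i : Set E))
    (h : Function.Bijective fun v : (∀ i, M i) => ∑ i, (v i : E)) :
    ∃ C ≥ 0, ∀ (v : ∀ i, M i) (i : ι), ‖(v i : E)‖ ≤ C * ‖∑ j, (v j : E)‖ := by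
  have : ∀ i, CompleteSpace (M i) := fun i => (hM i).completeSpace_coe
  let Φ : (∀ i, M i) →L[𝕜] E := ∑ i, (M i).subtypeL.comp (proj i)
  have hΦ : ⇑Φ = fun v => ∑ i, (v i : E) := funext fun v => by simp [Φ]
  obtain ⟨C, hC, hpre⟩ := Φ.exists_preimage_norm_le (hΦ ▸ h.2)
  refine ⟨C, hC.le, fun v i => ?_⟩
  obtain ⟨w, hw, hwC⟩ := hpre (Φ v)
  obtain rfl : w = v := (hΦ ▸ h.1) hw
  calc ‖(w i : E)‖ = ‖w i‖ := rfl
    _ ≤ ‖w‖ := norm_le_pi_norm w i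
    _ ≤ C * ‖Φ w‖ := hwC
    _ = C * ‖∑ j, (w j : E)‖ := by rw [hΦ]

theorem Ideal.ker_toCharacterSpace {B : Type*} [NormedCommRing B] [NormedAlgebra ℂ B]
    [CompleteSpace B] (M : Ideal B) [M.IsMaximal] : RingHom.ker M.toCharacterSpace = M :=
  (‹M.IsMaximal›.eq_of_le (RingHom.ker_ne_top _)
    fun _ => M.toCharacterSpace_apply_eq_zero_of_mem).symm

namespace Subalgebra

variable {X : Type*} [NormedAddCommGroup X] [NormedSpace ℂ X] (A : Subalgebra ℂ (X →L[ℂ] X))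

noncomputable def evalL (x : X) : A →L[ℂ] X :=
  (apply ℂ X x).comp A.toSubmodule.subtypeL

/-- The subspace `A x`. -/
noncomputable def orbit (x : X) : Submodule ℂ X := LinearMap.range (A.evalL x : A →ₗ[ℂ] X)

variable {A}

theorem mem_orbit {x y : X} : y ∈ A.orbit x ↔ ∃ a ∈ A, a x = y :=
  ⟨fun ⟨a, h⟩ => ⟨a, a.2, h⟩, fun ⟨a, ha, h⟩ => ⟨⟨a, ha⟩, h⟩⟩

theorem coe_orbit (x : X) : (A.orbit x : Set X) = {y | ∃ a ∈ A, a x = y} :=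
  Set.ext fun _ => mem_orbit

theorem apply_mem_orbit {a : X →L[ℂ] X} (ha : a ∈ A) (x : X) : a x ∈ A.orbit x :=
  mem_orbit.2 ⟨a, ha, rfl⟩

theorem self_mem_orbit (x : X) : x ∈ A.orbit x := apply_mem_orbit A.one_mem x

theorem bijective_sum_orbit {ι : Type*} [Fintype ι] (x : ι → X)
    (hspan : ∀ y : X, ∃ f : ι → (X →L[ℂ] X), (∀ i, f i ∈ A) ∧ y = ∑ i, f i (x i))
    (hind : ∀ f : ι → (X →L[ℂ] X), (∀ i, f i ∈ A) →
      (∑ i, f i (x i)) = 0 → ∀ i, f i (x i) = 0) :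
    Function.Bijective fun v : (∀ i, A.orbit (x i)) => ∑ i, (v i : X) := by
  constructor
  · intro v w hvw
    choose a ha hav using fun i => mem_orbit.1 (v i).2
    choose b hb hbw using fun i => mem_orbit.1 (w i).2
    have h0 := hind (fun i => a i - b i) (fun i => A.sub_mem (ha i) (hb i)) (by
      simpa [hav, hbw, Finset.sum_sub_distrib, sub_eq_zero] using hvw)
    funext i
    exact Subtype.ext (by simpa [hav, hbw, sub_eq_zero] using h0 i)
  · intro y
    obtain ⟨f, hf, rfl⟩ := hspan y
    exact ⟨fun i => ⟨f i (x i), apply_mem_orbit (hf i) _⟩, rfl⟩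

theorem apply_mem_orbit_of_mem_reflexiveClosure {x : X} (hx : IsClosed (A.orbit x : Set X))
    {S : Set (X →L[ℂ] X)} (hSA : S ⊆ A) {T : X →L[ℂ] X} (hT : T ∈ reflexiveClosure S)
    {y : X} (hy : y ∈ A.orbit x) : T y ∈ A.orbit x := by
  obtain ⟨a, ha, rfl⟩ := mem_orbit.1 hy
  refine closure_minimal ?_ hx (hT _)
  rintro _ ⟨l, hl, rfl⟩
  exact apply_mem_orbit (A.mul_mem (hSA hl) ha) x

variable [CompleteSpace X] [CompleteSpace A] {x : X}

theorem exists_norm_le_of_mem_orbit (hx : IsClosed (A.orbit x : Set X)) :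
    ∃ C > 0, ∀ y ∈ A.orbit x, ∃ a ∈ A, a x = y ∧ ‖a‖ ≤ C * ‖y‖ := by
  obtain ⟨C, hC, h⟩ := (A.evalL x).exists_preimage_norm_le_of_isClosed_range hx
  refine ⟨C, hC, fun y hy => ?_⟩
  obtain ⟨a, ha, haC⟩ := h y hy
  exact ⟨a, a.2, ha, haC⟩

theorem exists_norm_character_le (hx : IsClosed (A.orbit x : Set X)) (χ : characterSpace ℂ A)
    (hχ : annIdeal A x ≤ RingHom.ker χ) :
    ∃ K, ∀ a : A, ‖χ a‖ ≤ K * ‖(a : X →L[ℂ] X) x‖ := by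
  obtain ⟨C, -, hC⟩ := exists_norm_le_of_mem_orbit hx
  refine ⟨‖CharacterSpace.toCLM χ‖ * C, fun d => ?_⟩
  obtain ⟨a, ha, hax, haC⟩ := hC _ (apply_mem_orbit d.2 x)
  have hχd : χ d = χ ⟨a, ha⟩ := by
    rw [← sub_eq_zero, ← map_sub]
    exact hχ (show ((d - ⟨a, ha⟩ : A) : X →L[ℂ] X) x = 0 by simp [hax])
  calc ‖χ d‖ = ‖CharacterSpace.toCLM χ ⟨a, ha⟩‖ := by rw [hχd, CharacterSpace.coe_toCLM]
    _ ≤ ‖CharacterSpace.toCLM χ‖ * ‖a‖ := (CharacterSpace.toCLM χ).le_opNorm _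
    _ ≤ ‖CharacterSpace.toCLM χ‖ * (C * ‖(d : X →L[ℂ] X) x‖) := by gcongr
    _ = _ := by ring

/-- `χ` factors continuously through `a ↦ a x`, `χ (g - l h) = χ g` for `l ∈ S`, and
`(g - l h) x = T (h x) - l (h x)` is arbitrarily small. -/
theorem character_eq_zero_of_apply_eq (hx : IsClosed (A.orbit x : Set X))
    (χ : characterSpace ℂ A) (hχ : annIdeal A x ≤ RingHom.ker χ) {S : Set (X →L[ℂ] X)}
    (hSA : S ⊆ A) {T : X →L[ℂ] X} (hT : T ∈ reflexiveClosure S) {g h : A} (hh : χ h = 0)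
    (hg : (g : X →L[ℂ] X) x = T ((h : X →L[ℂ] X) x)) : χ g = 0 := by
  obtain ⟨K, hK⟩ := exists_norm_character_le hx χ hχ
  set y := (h : X →L[ℂ] X) x
  have hsub : (fun l : X →L[ℂ] X => l y) '' S ⊆ {z | ‖χ g‖ ≤ K * ‖T y - z‖} := by
    rintro _ ⟨l, hl, rfl⟩
    have hχg : χ g = χ (g - ⟨l, hSA hl⟩ * h) := by rw [map_sub, map_mul, hh, mul_zero, sub_zero]
    change ‖χ g‖ ≤ K * ‖T y - l y‖
    rw [hχg]
    simpa [hg, y] using hK (g - ⟨l, hSA hl⟩ * h)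
  have hclosed : IsClosed {z | ‖χ g‖ ≤ K * ‖T y - z‖} :=
    isClosed_le continuous_const (by fun_prop)
  simpa using closure_minimal hsub hclosed (hT y)

theorem apply_apply_comm_of_mem_reflexiveClosure (hcomm : ∀ a ∈ A, ∀ b ∈ A, a * b = b * a)
    (hx : IsClosed (A.orbit x : Set X))
    (hss : ∀ c : A, (∀ M : Ideal A, M.IsMaximal → annIdeal A x ≤ M → c ∈ M) → c ∈ annIdeal A x)
    {S : Set (X →L[ℂ] X)} (hSA : S ⊆ A) {T : X →L[ℂ] X} (hT : T ∈ reflexiveClosure S)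
    {f : X →L[ℂ] X} (hf : f ∈ A) : T (f x) = f (T x) := by
  let _ : NormedCommRing A :=
    { (inferInstance : NormedRing A) with mul_comm := fun a b => Subtype.ext (hcomm a a.2 b b.2) }
  obtain ⟨b, hb, hbx⟩ := mem_orbit.1 (apply_mem_orbit_of_mem_reflexiveClosure hx hSA hT
    (self_mem_orbit x))
  obtain ⟨g, hg, hgx⟩ := mem_orbit.1 (apply_mem_orbit_of_mem_reflexiveClosure hx hSA hT
    (apply_mem_orbit hf x))
  set f' : A := ⟨f, hf⟩
  set b' : A := ⟨b, hb⟩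
  set g' : A := ⟨g, hg⟩
  suffices g' - f' * b' ∈ annIdeal A x by
    simpa [annIdeal, sub_eq_zero, hgx, hbx, f', b', g'] using this
  refine hss _ fun M _ hannM => ?_
  rw [← M.ker_toCharacterSpace] at hannM ⊢
  set χ := M.toCharacterSpace
  -- `T` maps `(f - χ f) x` to `(g - χ f b) x`
  have key := character_eq_zero_of_apply_eq hx χ hannM hSA hT (g := g' - χ f' • b')
    (h := f' - χ f' • 1) (by simp) (by simp [f', b', g', hgx, hbx])
  simpa [RingHom.mem_ker, sub_eq_zero] using key

theorem exists_norm_apply_le_of_mem_orbit (hcomm : ∀ a ∈ A, ∀ b ∈ A, a * b = b * a)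
    (hx : IsClosed (A.orbit x : Set X)) :
    ∃ C ≥ 0, ∀ D : X →L[ℂ] X, (∀ f ∈ A, D (f x) = f (D x)) → D x ∈ A.orbit x →
      ∀ y ∈ A.orbit x, ‖D y‖ ≤ C * ‖D x‖ * ‖y‖ := by
  obtain ⟨C, hC, hpre⟩ := exists_norm_le_of_mem_orbit hx
  refine ⟨C, hC.le, fun D hD hDx y hy => ?_⟩
  obtain ⟨c, hc, hcx, hcC⟩ := hpre _ hDx
  obtain ⟨f, hf, rfl⟩ := mem_orbit.1 hy
  calc ‖D (f x)‖ = ‖c (f x)‖ := by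
        rw [hD f hf, ← hcx]
        exact congrArg (‖· x‖) (hcomm f hf c hc)
    _ ≤ ‖c‖ * ‖f x‖ := c.le_opNorm _
    _ ≤ C * ‖D x‖ * ‖f x‖ := by gcongr

theorem exists_opNorm_le_norm_apply_sum (hcomm : ∀ a ∈ A, ∀ b ∈ A, a * b = b * a)
    {ι : Type*} [Fintype ι] {x : ι → X} (hx : ∀ i, IsClosed (A.orbit (x i) : Set X))
    (hbij : Function.Bijective fun v : (∀ i, A.orbit (x i)) => ∑ i, (v i : X)) :
    ∃ K, ∀ D : X →L[ℂ] X, (∀ i, ∀ f ∈ A, D (f (x i)) = f (D (x i))) →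
      (∀ i, D (x i) ∈ A.orbit (x i)) → ‖D‖ ≤ K * ‖D (∑ i, x i)‖ := by
  obtain ⟨P, hP, hproj⟩ := exists_norm_le_norm_sum_of_bijective _ hx hbij
  choose C hC hDC using fun i => exists_norm_apply_le_of_mem_orbit hcomm (hx i)
  have hK : 0 ≤ (∑ i, C i) * P * P := by
    have := Finset.sum_nonneg fun i (_ : i ∈ Finset.univ) => hC i
    positivity
  refine ⟨(∑ i, C i) * P * P, fun D hD hDx => D.opNorm_le_bound (by positivity) fun z => ?_⟩
  obtain ⟨v, rfl⟩ := hbij.2 z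
  have hDxi : ∀ i, ‖D (x i)‖ ≤ P * ‖D (∑ i, x i)‖ := fun i => by
    simpa [map_sum] using hproj (fun j => ⟨D (x j), hDx j⟩) i
  have hvi : ∀ i, ‖(v i : X)‖ ≤ P * ‖∑ j, (v j : X)‖ := hproj v
  calc ‖D (∑ i, (v i : X))‖ ≤ ∑ i, ‖D (v i)‖ := by rw [map_sum]; exact norm_sum_le _ _
    _ ≤ ∑ i, C i * (P * ‖D (∑ i, x i)‖) * (P * ‖∑ j, (v j : X)‖) := by
        gcongr with i
        refine (hDC i D (hD i) (hDx i) _ (v i).2).trans (mul_le_mul ?_ (hvi i) (norm_nonneg _) ?_)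
        · exact mul_le_mul_of_nonneg_left (hDxi i) (hC i)
        · exact mul_nonneg (hC i) (mul_nonneg hP (norm_nonneg _))
    _ = (∑ i, C i) * P * P * ‖D (∑ i, x i)‖ * ‖∑ j, (v j : X)‖ := by
        rw [← Finset.sum_mul, ← Finset.sum_mul]; ring

end Subalgebra

open Subalgebra in
theorem stmt13_general {X : Type*} [NormedAddCommGroup X] [NormedSpace ℂ X] [CompleteSpace X]
    (A : Subalgebra ℂ (X →L[ℂ] X))
    (hSOT : ∀ T : X →L[ℂ] X,
      (T : X → X) ∈ closure ((fun a : X →L[ℂ] X => (a : X → X)) '' (A : Set (X →L[ℂ] X)))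
      → T ∈ A)
    (hcomm : ∀ a ∈ A, ∀ b ∈ A, a * b = b * a)
    (p : ℕ) (x : Fin p → X)
    (hc : ∀ j, IsClosed {y : X | ∃ a ∈ A, a (x j) = y})
    (hspan : ∀ y : X, ∃ f : Fin p → (X →L[ℂ] X), (∀ j, f j ∈ A) ∧ y = ∑ j, f j (x j))
    (hind : ∀ f : Fin p → (X →L[ℂ] X), (∀ j, f j ∈ A) →
      (∑ j, f j (x j)) = 0 → ∀ j, f j (x j) = 0)
    (hss : ∀ j, ∀ c : ↥A,
      (∀ M : Ideal ↥A, M.IsMaximal → annIdeal A (x j) ≤ M → c ∈ M) →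
      c ∈ annIdeal A (x j)) :
    ∀ L : Submodule ℂ (X →L[ℂ] X),
      (L : Set (X →L[ℂ] X)) ⊆ (A : Set (X →L[ℂ] X)) →
      IsClosed (L : Set (X →L[ℂ] X)) →
      ∀ T : X →L[ℂ] X, (∀ y : X, T y ∈ closure {z : X | ∃ l ∈ L, l y = z}) → T ∈ L := by
  intro L hLA hLclosed T hT
  have : CompleteSpace A := (isClosed_of_closure_coeFn_subset _ hSOT).completeSpace_coe
  have horb : ∀ j, IsClosed (A.orbit (x j) : Set X) := fun j => coe_orbit (x j) ▸ hc j
  have hmult : ∀ j, ∀ f ∈ A, T (f (x j)) = f (T (x j)) := fun j _ hf =>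
    apply_apply_comm_of_mem_reflexiveClosure hcomm (horb j) (hss j) hLA hT hf
  obtain ⟨K, hK⟩ := exists_opNorm_le_norm_apply_sum hcomm horb (bijective_sum_orbit x hspan hind)
  refine hLclosed.closure_subset (mem_closure_of_norm_sub_le (∑ j, x j) K (fun l hl => ?_) (hT _))
  rw [← sub_apply]
  refine hK (T - l) (fun j f hf => ?_) (fun j => sub_mem ?_ (apply_mem_orbit (hLA hl) _))
  · have hlf : l (f (x j)) = f (l (x j)) := congrArg (· (x j)) (hcomm l (hLA hl) f hf)
    rw [sub_apply, sub_apply, hmult j f hf, hlf, map_sub]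
  · exact apply_mem_orbit_of_mem_reflexiveClosure (horb j) hLA hT (self_mem_orbit _)

/-- Let `A ⊆ B(X)` be abelian, unital, semisimple, strongly closed, of split
strict multiplicity `p`, with every quotient `A/Iⱼ` semisimple. Then `A` is
hereditarily reflexive: every norm-closed subspace `L ⊆ A` is reflexive. -/
theorem stmt13 {X : Type*} [NormedAddCommGroup X] [NormedSpace ℂ X] [CompleteSpace X]
    (A : Subalgebra ℂ (X →L[ℂ] X))
    (hSOT : ∀ T : X →L[ℂ] X,
      (T : X → X) ∈ closure ((fun a : X →L[ℂ] X => (a : X → X)) '' (A : Set (X →L[ℂ] X)))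
      → T ∈ A)
    (hcomm : ∀ a ∈ A, ∀ b ∈ A, a * b = b * a)
    (hsemisimple : ∀ c : ↥A, (∀ M : Ideal ↥A, M.IsMaximal → c ∈ M) → c = 0)
    (p : ℕ) (x : Fin p → X)
    (hc : ∀ j, IsClosed {y : X | ∃ a ∈ A, a (x j) = y})
    (hspan : ∀ y : X, ∃ f : Fin p → (X →L[ℂ] X), (∀ j, f j ∈ A) ∧ y = ∑ j, f j (x j))
    (hind : ∀ f : Fin p → (X →L[ℂ] X), (∀ j, f j ∈ A) →
      (∑ j, f j (x j)) = 0 → ∀ j, f j (x j) = 0)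
    (hss : ∀ j, ∀ c : ↥A,
      (∀ M : Ideal ↥A, M.IsMaximal → annIdeal A (x j) ≤ M → c ∈ M) →
      c ∈ annIdeal A (x j)) :
    ∀ L : Submodule ℂ (X →L[ℂ] X),
      (L : Set (X →L[ℂ] X)) ⊆ (A : Set (X →L[ℂ] X)) →
      IsClosed (L : Set (X →L[ℂ] X)) →
      ∀ T : X →L[ℂ] X, (∀ y : X, T y ∈ closure {z : X | ∃ l ∈ L, l y = z}) → T ∈ L :=
  stmt13_general A hSOT hcomm p x hc hspan hind hss
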